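/- Let V be a vector space over F_q (q odd) with a nondegenerate symmetric bilinear form, and let a, b, c span a 3-dimensional subspace U = ⟨a,b,c⟩ that is nondegenerate, where ⟨a⟩, ⟨b⟩, ⟨c⟩ are nondegenerate 1-dimensional subspaces pairwise spanning elliptic 2-dimensional subspaces. If dim V ≥ 5 and the form on V is of plus type, then there exists a nondegenerate 1-dimensional subspace ⟨p⟩ ≤ U^⊥ such that ⟨a,b,c,p⟩ is a nondegenerate 4-dimensional subspace of plus type. -/

import Mathlib

open Module

/-- Plus type convention for a nondegenerate symmetric bilinear form over a finite
field of odd order, via the discriminant (Gram determinant modulo squares). -/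
def BIsPlusType {F M : Type*} [Field F] [AddCommGroup M] [Module F M]
    (B : LinearMap.BilinForm F M) : Prop :=
  ∃ (d : ℕ) (b : Basis (Fin d) F M),
    if Even d then IsSquare ((-1 : F) ^ (d / 2) * (Matrix.of fun i j => B (b i) (b j)).det)
    else (IsSquare ((-1 : F) ^ (d / 2) * (Matrix.of fun i j => B (b i) (b j)).det) ↔
      IsSquare (-1 : F))

/-- A subspace `W` is an *elliptic line* for `B` if it is 2-dimensional,
nondegenerate and anisotropic. -/
def IsEllipticLine {F V : Type*} [Field F] [AddCommGroup V] [Module F V]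
    (B : LinearMap.BilinForm F V) (W : Submodule F V) : Prop :=
  finrank F W = 2 ∧ (B.restrict W).Nondegenerate ∧ ∀ v ∈ W, B v v = 0 → v = 0

/-! Take an orthogonal basis `e` of `U`. The complement `U^⊥` is nondegenerate of dimension at
least 2, and over a finite field of odd order such a space represents every scalar; pick
`p ∈ U^⊥` with `B p p = ∏ B (eᵢ, eᵢ)`. Then `e` together with `p` is an orthogonal basis of
`⟨U, p⟩` whose Gram determinant `(∏ B (eᵢ, eᵢ))²` is a square. -/

namespace FiniteField

variable {F : Type*} [Field F] [Fintype F]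

theorem exists_mul_sq_add_mul_sq_eq (hF : ringChar F ≠ 2) {α β : F} (hα : α ≠ 0) (hβ : β ≠ 0)
    (t : F) : ∃ x y : F, α * x ^ 2 + β * y ^ 2 = t := by
  open Polynomial in
  obtain ⟨x, y, hxy⟩ := exists_root_sum_quadratic (f := C α * X ^ 2)
    (g := C β * X ^ 2 + C 0 * X + C (-t)) (degree_C_mul_X_pow 2 hα) (degree_quadratic hβ)
    (odd_card_of_char_ne_two hF)
  refine ⟨x, y, ?_⟩
  simp only [eval_add, eval_mul, eval_pow, eval_C, eval_X] at hxy
  linear_combination hxy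

end FiniteField

namespace LinearMap.BilinForm

variable {F V : Type*} [Field F] [AddCommGroup V] [Module F V] {B : LinearMap.BilinForm F V}

theorem Nondegenerate.restrict_orthogonal [FiniteDimensional F V] (hB : B.Nondegenerate)
    (hrefl : B.IsRefl) {W : Submodule F V} (hW : (B.restrict W).Nondegenerate) :
    (B.restrict (B.orthogonal W)).Nondegenerate := by
  rw [restrict_nondegenerate_iff_isCompl_orthogonal hrefl, orthogonal_orthogonal hB hrefl]
  exact (isCompl_orthogonal_of_restrict_nondegenerate hrefl hW).symm

theorem IsSymm.exists_apply_self_eq [Fintype F] (hsymm : B.IsSymm) (hF : ringChar F ≠ 2)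
    (hB : B.Nondegenerate) (hdim : 2 ≤ finrank F V) (t : F) : ∃ v, B v v = t := by
  have : FiniteDimensional F V := Module.finite_of_finrank_pos (by omega)
  have : Invertible (2 : F) := invertibleOfNonzero (Ring.two_ne_zero hF)
  obtain ⟨f, hf⟩ := exists_orthogonal_basis (isSymm_iff.mp hsymm)
  let i₀ : Fin (finrank F V) := ⟨0, by omega⟩
  let i₁ : Fin (finrank F V) := ⟨1, by omega⟩
  obtain ⟨x, y, hxy⟩ := FiniteField.exists_mul_sq_add_mul_sq_eq hF
    (iIsOrtho.not_isOrtho_basis_self_of_nondegenerate hf hB i₀)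
    (iIsOrtho.not_isOrtho_basis_self_of_nondegenerate hf hB i₁) t
  have h₀₁ : B (f i₀) (f i₁) = 0 := hf (by simp [i₀, i₁, Fin.ext_iff])
  have h₁₀ : B (f i₁) (f i₀) = 0 := by rw [hsymm.eq, h₀₁]
  refine ⟨x • f i₀ + y • f i₁, ?_⟩
  simp only [map_add, map_smul, LinearMap.add_apply, LinearMap.smul_apply, smul_eq_mul,
    h₀₁, h₁₀]
  linear_combination hxy

theorem iIsOrtho_cons {n : ℕ} {x : V} {w : Fin n → V} (hw : B.iIsOrtho w)
    (hxw : ∀ i, B x (w i) = 0) (hwx : ∀ i, B (w i) x = 0) :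
    B.iIsOrtho (Fin.cons x w : Fin (n + 1) → V) := by
  intro i j hij
  cases i using Fin.cases <;> cases j using Fin.cases
  · exact absurd rfl hij
  · exact hxw _
  · exact hwx _
  · exact hw (fun h => hij (congrArg Fin.succ h))

namespace iIsOrtho

variable {ι : Type*} {v : ι → V} (hv : B.iIsOrtho v) (hvv : ∀ i, B (v i) (v i) ≠ 0)
include hv hvv

theorem finrank_span [Fintype ι] :
    finrank F (Submodule.span F (Set.range v)) = Fintype.card ι :=
  finrank_span_eq_card (linearIndependent_of_iIsOrtho hv hvv)

theorem nondegenerate_restrict_span :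
    (B.restrict (Submodule.span F (Set.range v))).Nondegenerate := by
  let b := Basis.span (linearIndependent_of_iIsOrtho hv hvv)
  refine (nondegenerate_iff_not_isOrtho_basis_self _ b ?_).mpr ?_
  · intro i j hij
    change B (b i : V) (b j : V) = 0
    simpa only [b, Basis.coe_span_apply] using hv hij
  · simpa only [b, restrict_apply, LinearMap.domRestrict_apply, Basis.coe_span_apply] using hvv

end iIsOrtho

theorem iIsOrtho.bIsPlusType_restrict_span {n : ℕ} {v : Fin n → V} (hv : B.iIsOrtho v)
    (hvv : ∀ i, B (v i) (v i) ≠ 0) (hn : Even n)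
    (hsq : IsSquare ((-1 : F) ^ (n / 2) * ∏ i, B (v i) (v i))) :
    BIsPlusType (B.restrict (Submodule.span F (Set.range v))) := by
  let b := Basis.span (linearIndependent_of_iIsOrtho hv hvv)
  have hgram : (Matrix.of fun i j => B.restrict _ (b i) (b j)) =
      Matrix.diagonal fun i => B (v i) (v i) := by
    ext i j
    rcases eq_or_ne i j with rfl | hij
    · simp [b]
    · simpa [b, Matrix.diagonal_apply_ne _ hij] using hv hij
  refine ⟨n, b, ?_⟩
  rwa [if_pos hn, hgram, Matrix.det_diagonal]

end LinearMap.BilinForm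

theorem triangle_in_plus_four_space_general
    {F V : Type*} [Field F] [Fintype F] [AddCommGroup V] [Module F V]
    (q : ℕ) (hq : Fintype.card F = q) (hodd : Odd q)
    (hdim : 5 ≤ finrank F V)
    (B : LinearMap.BilinForm F V) (hsymm : B.IsSymm) (hB : B.Nondegenerate)
    (a b c : V)
    (hU3 : finrank F (Submodule.span F {a, b, c} : Submodule F V) = 3)
    (hUnd : (B.restrict (Submodule.span F {a, b, c})).Nondegenerate) :
    ∃ p : V, B p p ≠ 0 ∧ (∀ u ∈ Submodule.span F {a, b, c}, B u p = 0) ∧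
      finrank F (Submodule.span F {a, b, c} ⊔ Submodule.span F {p} : Submodule F V) = 4 ∧
      (B.restrict (Submodule.span F {a, b, c} ⊔ Submodule.span F {p})).Nondegenerate ∧
      BIsPlusType (B.restrict (Submodule.span F {a, b, c} ⊔ Submodule.span F {p})) := by
  set U := Submodule.span F {a, b, c}
  have hF : ringChar F ≠ 2 := fun h => by
    have := FiniteField.even_card_iff_char_two.mp h
    have := Nat.odd_iff.mp hodd
    omega
  have : FiniteDimensional F V := Module.finite_of_finrank_pos (by omega)
  have : Invertible (2 : F) := invertibleOfNonzero (Ring.two_ne_zero hF)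
  obtain ⟨e, he⟩ := LinearMap.BilinForm.exists_orthogonal_basis
    (LinearMap.BilinForm.isSymm_iff.mp (hsymm.restrict U))
  have he_ne : ∀ i, B (e i) (e i) ≠ 0 :=
    LinearMap.BilinForm.iIsOrtho.not_isOrtho_basis_self_of_nondegenerate he hUnd
  obtain ⟨⟨p, hpU⟩, hp⟩ := (hsymm.restrict _).exists_apply_self_eq hF
    (hB.restrict_orthogonal hsymm.isRefl hUnd)
    (by rw [LinearMap.BilinForm.finrank_orthogonal hB]; omega) (∏ i, B (e i) (e i))
  replace hp : B p p = ∏ i, B (e i) (e i) := hp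
  set v : Fin (finrank F U + 1) → V := Fin.cons p fun i => e i
  have hv : B.iIsOrtho v := LinearMap.BilinForm.iIsOrtho_cons he
    (fun i => hsymm.isRefl _ _ (hpU _ (e i).2)) (fun i => hpU _ (e i).2)
  have hvv : ∀ i, B (v i) (v i) ≠ 0 :=
    Fin.cases (by simpa [v, hp] using Finset.prod_ne_zero_iff.mpr fun i _ => he_ne i) he_ne
  have hspan : Submodule.span F (Set.range v) = U ⊔ Submodule.span F {p} := by
    rw [Fin.range_cons, Submodule.span_insert, sup_comm,
      show (fun i => (e i : V)) = U.subtype ∘ e from rfl, Set.range_comp, Submodule.span_image,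
      e.span_eq, Submodule.map_subtype_top]
  refine ⟨p, hvv 0, hpU, ?_, ?_, ?_⟩ <;> rw [← hspan]
  · rw [hv.finrank_span hvv, Fintype.card_fin, hU3]
  · exact hv.nondegenerate_restrict_span hvv
  · refine hv.bIsPlusType_restrict_span hvv (by rw [hU3]; decide) ?_
    rw [Fin.prod_univ_succ, show (finrank F U + 1) / 2 = 2 by omega]
    exact ⟨∏ i, B (e i) (e i), by simp [v, hp]⟩

/-- Over `F_q` (`q` odd), in a space of dimension ≥ 5 with a nondegenerate symmetric
bilinear form of plus type: if `a`, `b`, `c` span a nondegenerate 3-space `U`, with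
`⟨a⟩`, `⟨b⟩`, `⟨c⟩` nondegenerate points pairwise spanning elliptic lines, then there
is a nondegenerate point `⟨p⟩` in `U^⊥` such that `⟨a,b,c,p⟩` is a nondegenerate
4-dimensional subspace of plus type. -/
theorem triangle_in_plus_four_space
    {F V : Type*} [Field F] [Fintype F] [AddCommGroup V] [Module F V]
    (q : ℕ) (hq : Fintype.card F = q) (hodd : Odd q)
    (hdim : 5 ≤ finrank F V)
    (B : LinearMap.BilinForm F V) (hsymm : B.IsSymm) (hB : B.Nondegenerate)
    (hplus : BIsPlusType B)
    (a b c : V) (ha : B a a ≠ 0) (hb : B b b ≠ 0) (hc : B c c ≠ 0)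
    (hab : IsEllipticLine B (Submodule.span F {a, b}))
    (hbc : IsEllipticLine B (Submodule.span F {b, c}))
    (hac : IsEllipticLine B (Submodule.span F {a, c}))
    (hU3 : finrank F (Submodule.span F {a, b, c} : Submodule F V) = 3)
    (hUnd : (B.restrict (Submodule.span F {a, b, c})).Nondegenerate) :
    ∃ p : V, B p p ≠ 0 ∧ (∀ u ∈ Submodule.span F {a, b, c}, B u p = 0) ∧
      finrank F (Submodule.span F {a, b, c} ⊔ Submodule.span F {p} : Submodule F V) = 4 ∧
      (B.restrict (Submodule.span F {a, b, c} ⊔ Submodule.span F {p})).Nondegenerate ∧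
      BIsPlusType (B.restrict (Submodule.span F {a, b, c} ⊔ Submodule.span F {p})) :=
  triangle_in_plus_four_space_general q hq hodd hdim B hsymm hB a b c hU3 hUnd
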